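/- Let E₁,…,E_{m−1} be l × l real matrices with Eᵢᵀ = −Eᵢ, Eᵢ² = −I, and Eᵢ·Eⱼ = −Eⱼ·Eᵢ for i ≠ j; let α, β > 0 with α² + β² = 1; and let (u,v) ∈ V₂^{α,β}. Suppose x ∈ ℝˡ satisfies |x| = α, ⟨x,u⟩ = 0, ⟨x,v⟩ = 0, and ⟨x, Eᵢv⟩ = 0 for 1 ≤ i ≤ m−1. Then the curve γ(t) = (cos t·u + sin t·x, v) satisfies γ(t) ∈ V₂^{α,β} for all t ∈ ℝ and γ(0) = (u,v); moreover, the curve t ↦ ξ(γ(t)), where ξ(u,v) = (−(β/α)·u, (α/β)·v), has derivative at t = 0 equal to −(β/α) times the derivative of γ at t = 0, and γ′(0) = (x, 0). -/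

import Mathlib

/-! Since `x ⟂ u` and `‖x‖ = ‖u‖`, the curve rotates `u` in the plane of `u` and `x`, which
keeps its length; the remaining conditions on the first component are linear, and `x` meets
them as `u` does (`⟪Eᵢ x, v⟫ = -⟪x, Eᵢ v⟫` by skew-symmetry). The normal field `ξ` is linear,
so `(ξ ∘ γ)′(0) = ξ(γ′(0)) = ξ(x, 0) = -(β/α) • (x, 0)`. -/

open scoped RealInnerProductSpace

/-- The action of an `l × l` real matrix on `EuclideanSpace ℝ (Fin l)`. -/
noncomputable def matAct {l : ℕ} (A : Matrix (Fin l) (Fin l) ℝ)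
    (u : EuclideanSpace ℝ (Fin l)) : EuclideanSpace ℝ (Fin l) :=
  (WithLp.equiv 2 (Fin l → ℝ)).symm (A.mulVec (WithLp.equiv 2 (Fin l → ℝ) u))

/-- Pinkall–Thorbergsson's deformed Clifford–Stiefel manifold `V₂^{α,β}`. -/
noncomputable def cliffordV2ab (l m : ℕ) (E : Fin (m - 1) → Matrix (Fin l) (Fin l) ℝ)
    (α β : ℝ) : Set (EuclideanSpace ℝ (Fin l) × EuclideanSpace ℝ (Fin l)) :=
  {p | ‖p.1‖ = α ∧ ‖p.2‖ = β ∧ ⟪p.1, p.2⟫ = 0 ∧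
    ∀ i : Fin (m - 1), ⟪matAct (E i) p.1, p.2⟫ = 0}

/-- The unit normal field `ξ(u,v) = (−(β/α)·u, (α/β)·v)` on `V₂^{α,β}`. -/
noncomputable def xiField {l : ℕ} (α β : ℝ)
    (p : EuclideanSpace ℝ (Fin l) × EuclideanSpace ℝ (Fin l)) :
    EuclideanSpace ℝ (Fin l) × EuclideanSpace ℝ (Fin l) :=
  ((-(β / α)) • p.1, (α / β) • p.2)

lemma matAct_eq_toEuclideanLin {l : ℕ} (A : Matrix (Fin l) (Fin l) ℝ) :
    matAct A = Matrix.toEuclideanLin A :=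
  rfl

lemma inner_matAct_left_of_transpose_eq_neg {l : ℕ} {A : Matrix (Fin l) (Fin l) ℝ}
    (hA : A.transpose = -A) (p q : EuclideanSpace ℝ (Fin l)) :
    ⟪matAct A p, q⟫ = -⟪p, matAct A q⟫ := by
  have hadj : LinearMap.adjoint (Matrix.toEuclideanLin A) = -Matrix.toEuclideanLin A := by
    rw [← Matrix.toEuclideanLin_conjTranspose_eq_adjoint,
      Matrix.conjTranspose_eq_transpose_of_trivial, hA, map_neg]
  rw [matAct_eq_toEuclideanLin, ← LinearMap.adjoint_inner_right, hadj, LinearMap.neg_apply,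
    inner_neg_right]

lemma norm_cos_smul_add_sin_smul {F : Type*} [NormedAddCommGroup F] [InnerProductSpace ℝ F]
    {u x : F} (hux : ⟪u, x⟫ = 0) (hx : ‖x‖ = ‖u‖) (t : ℝ) :
    ‖Real.cos t • u + Real.sin t • x‖ = ‖u‖ := by
  have hsq : ‖Real.cos t • u + Real.sin t • x‖ ^ 2 = ‖u‖ ^ 2 := by
    rw [norm_add_sq_real, real_inner_smul_left, real_inner_smul_right, hux, norm_smul,
      norm_smul, hx, mul_pow, mul_pow, Real.norm_eq_abs, Real.norm_eq_abs, sq_abs, sq_abs]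
    linear_combination ‖u‖ ^ 2 * Real.cos_sq_add_sin_sq t
  exact (pow_left_inj₀ (norm_nonneg _) (norm_nonneg _) two_ne_zero).mp hsq

lemma hasDerivAt_cos_smul_add_sin_smul {F : Type*} [NormedAddCommGroup F] [NormedSpace ℝ F]
    (u x : F) (t : ℝ) :
    HasDerivAt (fun s : ℝ => Real.cos s • u + Real.sin s • x)
      ((-Real.sin t) • u + Real.cos t • x) t :=
  ((Real.hasDerivAt_cos t).smul_const u).add ((Real.hasDerivAt_sin t).smul_const x)

lemma hasDerivAt_xiField_comp {l : ℕ} {α β t : ℝ}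
    {γ : ℝ → EuclideanSpace ℝ (Fin l) × EuclideanSpace ℝ (Fin l)}
    {γ' : EuclideanSpace ℝ (Fin l) × EuclideanSpace ℝ (Fin l)} (h : HasDerivAt γ γ' t) :
    HasDerivAt (fun s => xiField α β (γ s)) (xiField α β γ') t := by
  have h₁ : HasDerivAt (fun s => (γ s).1) γ'.1 t :=
    (hasFDerivAt_fst (p := γ t)).comp_hasDerivAt t h
  have h₂ : HasDerivAt (fun s => (γ s).2) γ'.2 t :=
    (hasFDerivAt_snd (p := γ t)).comp_hasDerivAt t h
  exact (h₁.const_smul (-(β / α))).prodMk (h₂.const_smul (α / β))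

lemma xiField_mk_zero {l : ℕ} (α β : ℝ) (x : EuclideanSpace ℝ (Fin l)) :
    xiField α β (x, 0) = (-(β / α)) • (x, (0 : EuclideanSpace ℝ (Fin l))) := by
  simp [xiField]

lemma cos_smul_add_sin_smul_mem_cliffordV2ab {l m : ℕ}
    {E : Fin (m - 1) → Matrix (Fin l) (Fin l) ℝ} (hskew : ∀ i, (E i).transpose = -(E i))
    {α β : ℝ} {u v x : EuclideanSpace ℝ (Fin l)} (huv : (u, v) ∈ cliffordV2ab l m E α β)
    (hx : ‖x‖ = α) (hxu : ⟪x, u⟫ = 0) (hxv : ⟪x, v⟫ = 0)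
    (hxE : ∀ i, ⟪x, matAct (E i) v⟫ = 0) (t : ℝ) :
    (Real.cos t • u + Real.sin t • x, v) ∈ cliffordV2ab l m E α β := by
  obtain ⟨hu, hv, huv, hE⟩ : ‖u‖ = α ∧ ‖v‖ = β ∧ ⟪u, v⟫ = 0 ∧
      ∀ i, ⟪matAct (E i) u, v⟫ = 0 := huv
  refine ⟨?_, hv, ?_, fun i => ?_⟩
  · rw [← hu]
    exact norm_cos_smul_add_sin_smul (by rw [real_inner_comm, hxu]) (hx.trans hu.symm) t
  · simp [inner_add_left, real_inner_smul_left, huv, hxv]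
  · have hEx : ⟪matAct (E i) x, v⟫ = 0 := by
      rw [inner_matAct_left_of_transpose_eq_neg (hskew i), hxE i, neg_zero]
    rw [matAct_eq_toEuclideanLin, map_add, map_smul, map_smul, inner_add_left,
      real_inner_smul_left, real_inner_smul_left, ← matAct_eq_toEuclideanLin, hE i, hEx,
      mul_zero, mul_zero, add_zero]

theorem principal_curvature_beta_div_alpha_general (l m : ℕ)
    (E : Fin (m - 1) → Matrix (Fin l) (Fin l) ℝ)
    (hskew : ∀ i, (E i).transpose = -(E i))
    (α β : ℝ)
    (u v : EuclideanSpace ℝ (Fin l)) (huv : (u, v) ∈ cliffordV2ab l m E α β)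
    (x : EuclideanSpace ℝ (Fin l)) (hx : ‖x‖ = α) (hxu : ⟪x, u⟫ = 0) (hxv : ⟪x, v⟫ = 0)
    (hxE : ∀ i : Fin (m - 1), ⟪x, matAct (E i) v⟫ = 0) :
    (∀ t : ℝ, (Real.cos t • u + Real.sin t • x, v) ∈ cliffordV2ab l m E α β) ∧
    ((Real.cos (0:ℝ)) • u + (Real.sin (0:ℝ)) • x, v) = (u, v) ∧
    deriv (fun t : ℝ => xiField α β (Real.cos t • u + Real.sin t • x, v)) 0 =
      (-(β / α)) • deriv (fun t : ℝ =>
        ((Real.cos t • u + Real.sin t • x, v) :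
          EuclideanSpace ℝ (Fin l) × EuclideanSpace ℝ (Fin l))) 0 ∧
    deriv (fun t : ℝ =>
        ((Real.cos t • u + Real.sin t • x, v) :
          EuclideanSpace ℝ (Fin l) × EuclideanSpace ℝ (Fin l))) 0 = (x, 0) := by
  have hγ : HasDerivAt (fun t : ℝ =>
      ((Real.cos t • u + Real.sin t • x, v) :
        EuclideanSpace ℝ (Fin l) × EuclideanSpace ℝ (Fin l))) (x, 0) 0 := by
    simpa using (hasDerivAt_cos_smul_add_sin_smul u x 0).prodMk (hasDerivAt_const 0 v)
  refine ⟨cos_smul_add_sin_smul_mem_cliffordV2ab hskew huv hx hxu hxv hxE, by simp, ?_, hγ.deriv⟩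
  rw [(hasDerivAt_xiField_comp hγ).deriv, hγ.deriv, xiField_mk_zero]

/-- Let `E₁,…,E_{m−1}` be a Clifford system, `α, β > 0` with `α² + β² = 1`, and
`(u,v) ∈ V₂^{α,β}`.  Suppose `x ∈ ℝˡ` satisfies `|x| = α`, `⟨x,u⟩ = 0`, `⟨x,v⟩ = 0`,
and `⟨x, Eᵢv⟩ = 0` for all `i`.  Then the curve `γ(t) = (cos t·u + sin t·x, v)` lies in
`V₂^{α,β}`, passes through `(u,v)` at `t = 0`, and the curve `t ↦ ξ(γ(t))` has derivative
at `t = 0` equal to `−(β/α)` times `γ′(0)`, where `γ′(0) = (x, 0)`. -/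
theorem principal_curvature_beta_div_alpha (l m : ℕ)
    (E : Fin (m - 1) → Matrix (Fin l) (Fin l) ℝ)
    (hskew : ∀ i, (E i).transpose = -(E i))
    (hsq : ∀ i, E i * E i = -1)
    (hanti : ∀ i j, i ≠ j → E i * E j = -(E j * E i))
    (α β : ℝ) (hα : 0 < α) (hβ : 0 < β) (hαβ : α ^ 2 + β ^ 2 = 1)
    (u v : EuclideanSpace ℝ (Fin l)) (huv : (u, v) ∈ cliffordV2ab l m E α β)
    (x : EuclideanSpace ℝ (Fin l)) (hx : ‖x‖ = α) (hxu : ⟪x, u⟫ = 0) (hxv : ⟪x, v⟫ = 0)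
    (hxE : ∀ i : Fin (m - 1), ⟪x, matAct (E i) v⟫ = 0) :
    (∀ t : ℝ, (Real.cos t • u + Real.sin t • x, v) ∈ cliffordV2ab l m E α β) ∧
    ((Real.cos (0:ℝ)) • u + (Real.sin (0:ℝ)) • x, v) = (u, v) ∧
    deriv (fun t : ℝ => xiField α β (Real.cos t • u + Real.sin t • x, v)) 0 =
      (-(β / α)) • deriv (fun t : ℝ =>
        ((Real.cos t • u + Real.sin t • x, v) :
          EuclideanSpace ℝ (Fin l) × EuclideanSpace ℝ (Fin l))) 0 ∧
    deriv (fun t : ℝ =>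
        ((Real.cos t • u + Real.sin t • x, v) :
          EuclideanSpace ℝ (Fin l) × EuclideanSpace ℝ (Fin l))) 0 = (x, 0) :=
  principal_curvature_beta_div_alpha_general l m E hskew α β u v huv x hx hxu hxv hxE
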